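/- Let A and B denote the images of the subgroups ⟨a⟩ and ⟨b⟩ under the abelianization map G → G/G'. Then A ∩ B = 1 and A·B = G/G' (i.e., G/G' is the internal direct sum of A and B) if and only if gcd(m, r−1) divides t. (This is the criterion for the family consisting of ⟨a⟩, ⟨b⟩ and their conjugates to be generating and independent.) -/

import Mathlib

/-! From `b⁻¹ a b = a ^ r` we get `⁅b⁻¹, a⁆ = a ^ (r - 1)`. The cyclic subgroup `⟨a ^ (r - 1)⟩`
is normal, and modulo it the generators `a`, `b` commute, so it is exactly `G'`. In particular
`G' ≤ ⟨a⟩`, so the images of `⟨a⟩` and `⟨b⟩` meet trivially iff `⟨a⟩ ∩ ⟨b⟩ = ⟨b ^ s⟩ = ⟨a ^ t⟩`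
lies in `⟨a ^ (r - 1)⟩`, i.e. iff `gcd m (r - 1) ∣ t`; they always generate `G/G'`. -/

open scoped commutatorElement

section

open Subgroup

variable {G : Type*} [Group G]

theorem pow_mem_zpowers_pow_iff (a : G) (k n : ℕ) :
    a ^ k ∈ zpowers (a ^ n) ↔ Nat.gcd (orderOf a) n ∣ k := by
  rw [← Int.gcd_natCast_natCast, Int.gcd_dvd_iff, mem_zpowers_iff, exists_comm]
  refine exists_congr fun y => ?_
  rw [← zpow_natCast, ← zpow_natCast, ← zpow_mul, zpow_eq_zpow_iff_modEq, Int.modEq_iff_dvd,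
    dvd_def]
  refine exists_congr fun x => ?_
  constructor <;> intro h <;> linarith

theorem mem_normalizer_zpowers_of_conj_mem [Finite G] {g c : G} (h : g * c * g⁻¹ ∈ zpowers c) :
    g ∈ normalizer (zpowers c : Set G) := by
  refine mem_normalizer_fintype ?_
  rintro _ ⟨k, rfl⟩
  rw [← conj_zpow]
  exact zpow_mem h k

theorem commutator_le_of_closure_pair_eq_top {N : Subgroup G} [N.Normal] {a b : G}
    (hgen : closure {a, b} = ⊤) (hab : ⁅a, b⁆ ∈ N) : commutator G ≤ N := by
  set π := QuotientGroup.mk' N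
  have hcomm : π a * π b = π b * π a := by
    rw [← commutatorElement_eq_one_iff_mul_comm, ← map_commutatorElement]
    exact (QuotientGroup.eq_one_iff _).mpr hab
  have hQgen : closure {π a, π b} = ⊤ := by
    rw [← Set.image_pair, ← MonoidHom.map_closure, hgen, ← MonoidHom.range_eq_map,
      MonoidHom.range_eq_top_of_surjective _ (QuotientGroup.mk'_surjective N)]
  have hcentral : closure {π a, π b} ≤ centralizer (closure {π a, π b} : Set (G ⧸ N)) := by
    rw [centralizer_closure, closure_le]
    rintro x (rfl | rfl) <;> rintro y (rfl | rfl) <;> simp [hcomm]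
  rw [hQgen] at hcentral
  rw [← Normal.quotient_commutative_iff_commutator_le]
  exact ⟨⟨fun x y => mem_centralizer_iff.mp (hcentral (mem_top y)) x (mem_top x)⟩⟩

theorem map_mk_inf_map_mk_eq_bot_iff {N H K : Subgroup G} [N.Normal] (hNH : N ≤ H) :
    H.map (QuotientGroup.mk' N) ⊓ K.map (QuotientGroup.mk' N) = ⊥ ↔ H ⊓ K ≤ N := by
  constructor
  · intro h x hx
    have : QuotientGroup.mk' N x ∈ H.map (QuotientGroup.mk' N) ⊓ K.map (QuotientGroup.mk' N) :=
      ⟨mem_map_of_mem _ hx.1, mem_map_of_mem _ hx.2⟩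
    rwa [h, mem_bot, QuotientGroup.mk'_apply, QuotientGroup.eq_one_iff] at this
  · intro h
    rw [eq_bot_iff]
    rintro _ ⟨⟨x, hx, rfl⟩, ⟨y, hy, hxy⟩⟩
    rw [QuotientGroup.mk'_apply, QuotientGroup.mk'_apply, QuotientGroup.eq] at hxy
    have hyH : y ∈ H := by simpa using H.mul_mem hx (H.inv_mem (hNH hxy))
    rw [mem_bot, QuotientGroup.mk'_apply, QuotientGroup.eq_one_iff]
    simpa using N.mul_mem (h ⟨hyH, hy⟩) hxy

theorem zpowers_inf_zpowers_eq [Finite G] {b : G} {H : Subgroup G} {s : ℕ}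
    (h : ∀ j : ℕ, b ^ j ∈ H ↔ s ∣ j) : H ⊓ zpowers b = zpowers (b ^ s) := by
  refine le_antisymm ?_
    (le_inf (zpowers_le.mpr ((h s).mpr dvd_rfl)) (zpowers_le.mpr (pow_mem (mem_zpowers b) s)))
  rintro x ⟨hxH, hxb⟩
  obtain ⟨j, rfl⟩ := (mem_powers_iff_mem_zpowers).mpr hxb
  obtain ⟨q, rfl⟩ := (h j).mp hxH
  show b ^ (s * q) ∈ _
  rw [pow_mul]
  exact pow_mem (mem_zpowers _) q

theorem commutator_eq_zpowers_pow_sub_one [Finite G] {a b : G} {r : ℕ}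
    (hgen : closure {a, b} = ⊤) (hr : 0 < r) (hcon : b⁻¹ * a * b = a ^ r) :
    commutator G = zpowers (a ^ (r - 1)) := by
  have hc : ⁅b⁻¹, a⁆ = a ^ (r - 1) := by
    rw [commutatorElement_def, inv_inv, hcon, pow_sub a hr, pow_one]
  have hnormal : (zpowers (a ^ (r - 1))).Normal := by
    rw [← normalizer_eq_top_iff, eq_top_iff, ← hgen, closure_le]
    rintro x (rfl | rfl)
    · apply mem_normalizer_zpowers_of_conj_mem
      rw [(Commute.self_pow x (r - 1)).eq, mul_inv_cancel_right]
      exact mem_zpowers _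
    · apply inv_mem_iff.mp
      apply mem_normalizer_zpowers_of_conj_mem
      have hconj := conj_pow (a := x⁻¹) (b := a) (i := r - 1)
      rw [inv_inv] at hconj
      rw [inv_inv, ← hconj, hcon, ← pow_mul, mul_comm, pow_mul]
      exact pow_mem (mem_zpowers _) r
  have hab_conj : ⁅a, b⁆ = b * ⁅b⁻¹, a⁆ * b⁻¹ := by
    simp only [commutatorElement_def]
    group
  refine le_antisymm (commutator_le_of_closure_pair_eq_top hgen ?_) (zpowers_le.mpr ?_)
  · rw [hab_conj, hc]
    exact hnormal.conj_mem _ (mem_zpowers _) b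
  · rw [← hc]
    exact commutator_mem_commutator (mem_top _) (mem_top _)

end

theorem independence_criterion_general {G : Type*} [Group G] [Fintype G]
    (m s t r : ℕ) (hr : 0 < r)
    (a b : G) (hgen : Subgroup.closure ({a, b} : Set G) = ⊤)
    (hba : b ^ s = a ^ t) (hcon : b⁻¹ * a * b = a ^ r)
    (horda : orderOf a = m)
    (hordb : ∀ j : ℕ, b ^ j ∈ Subgroup.zpowers a ↔ s ∣ j)
    (A B : Subgroup (G ⧸ commutator G))
    (hA : A = (Subgroup.zpowers a).map (QuotientGroup.mk' (commutator G)))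
    (hB : B = (Subgroup.zpowers b).map (QuotientGroup.mk' (commutator G))) :
    (A ⊓ B = ⊥ ∧ A ⊔ B = ⊤) ↔ Nat.gcd m (r - 1) ∣ t := by
  subst hA hB
  have hG' : commutator G = Subgroup.zpowers (a ^ (r - 1)) :=
    commutator_eq_zpowers_pow_sub_one hgen hr hcon
  have hG'a : commutator G ≤ Subgroup.zpowers a :=
    hG' ▸ Subgroup.zpowers_le.mpr (pow_mem (Subgroup.mem_zpowers a) _)
  have hsup : Subgroup.zpowers a ⊔ Subgroup.zpowers b = ⊤ := by
    rw [Subgroup.zpowers_eq_closure, Subgroup.zpowers_eq_closure, ← Subgroup.closure_union,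
      Set.singleton_union, hgen]
  rw [← Subgroup.map_sup, hsup, Subgroup.map_top_of_surjective _ (QuotientGroup.mk'_surjective _),
    eq_self, and_true, map_mk_inf_map_mk_eq_bot_iff hG'a, zpowers_inf_zpowers_eq hordb,
    Subgroup.zpowers_le, hba, hG', pow_mem_zpowers_pow_iff, horda]

/-- Let `A`, `B` be the images of `⟨a⟩` and `⟨b⟩` under the
abelianization map `G → G/G'` of the metacyclic group
`G = ⟨a, b | a^m = 1, b^s = a^t, b⁻¹ab = a^r⟩`. Then `A ∩ B = 1` and `A·B = G/G'`
(i.e. `G/G'` is the internal direct sum of `A` and `B`) if and only if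
`gcd m (r−1) ∣ t`. -/
theorem independence_criterion {G : Type*} [Group G] [Fintype G]
    (m s t r : ℕ) (hm : 0 < m) (hs : 0 < s) (ht : 0 < t) (hr : 0 < r)
    (hrsm : r ^ s ≡ 1 [MOD m]) (hmt : m ∣ t * (r - 1))
    (a b : G) (hgen : Subgroup.closure ({a, b} : Set G) = ⊤)
    (ham : a ^ m = 1) (hba : b ^ s = a ^ t) (hcon : b⁻¹ * a * b = a ^ r)
    (horda : orderOf a = m)
    (hordb : ∀ j : ℕ, b ^ j ∈ Subgroup.zpowers a ↔ s ∣ j)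
    (A B : Subgroup (G ⧸ commutator G))
    (hA : A = (Subgroup.zpowers a).map (QuotientGroup.mk' (commutator G)))
    (hB : B = (Subgroup.zpowers b).map (QuotientGroup.mk' (commutator G))) :
    (A ⊓ B = ⊥ ∧ A ⊔ B = ⊤) ↔ Nat.gcd m (r - 1) ∣ t :=
  independence_criterion_general m s t r hr a b hgen hba hcon horda hordb A B hA hB
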